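/- Let ψ be a family of subsets of {1,…,k}. For a k-tuple D̄ = (D_1, …, D_k) of finite sets define N(D̄, ψ) = ∑_{T ⊆ Π_ψ(D̄), π_i(T) = D_i for all i} (−1)^{|T|}. Then the quantity N(D̄, ψ) · (−1)^{|D̄|} depends only on ψ and on sig(D̄): for any two k-tuples of finite sets D̄ and D̄′ with sig(D̄) = sig(D̄′), one has N(D̄, ψ) · (−1)^{|D̄|} = N(D̄′, ψ) · (−1)^{|D̄′|}. -/
import Mathlib


open Finset

/-- `PiPsi ψ D` is `Π_ψ(D̄)`: the set of tuples `x ∈ (D_1 ∪ {*}) × … × (D_k ∪ {*})`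
(with `* = none`) whose support `{i : x i ≠ *}` belongs to `ψ`. -/
def PiPsi {α : Type*} [DecidableEq α] {k : ℕ} (ψ : Finset (Finset (Fin k)))
    (D : Fin k → Finset α) : Finset (Fin k → Option α) :=
  (Fintype.piFinset fun i => insert none ((D i).image some)).filter
    fun x => (Finset.univ.filter fun i => x i ≠ none) ∈ ψ

/-- `Npsi ψ D = N(D̄, ψ) = ∑_{T ⊆ Π_ψ(D̄), π_i(T) = D_i ∀i} (−1)^{|T|}`, where
`π_i(T) = {x_i : x ∈ T, x_i ≠ *}`. -/
def Npsi {α : Type*} [DecidableEq α] {k : ℕ} (ψ : Finset (Finset (Fin k)))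
    (D : Fin k → Finset α) : ℤ :=
  ∑ T ∈ ((PiPsi ψ D).powerset.filter
    fun T => ∀ i, T.biUnion (fun x => (x i).toFinset) = D i), (-1 : ℤ) ^ T.card


section Aux
variable {α : Type*} [DecidableEq α] {k : ℕ}

lemma aux_sum_ite_subset (D E : Finset α) (hE : E ⊆ D) :
    (∑ S ∈ D.powerset, if E ⊆ S then (-1:ℤ)^((D \ S).card) else 0)
      = if E = D then 1 else 0 := by
  have step : (∑ S ∈ D.powerset, if E ⊆ S then (-1:ℤ)^((D \ S).card) else 0)
      = ∑ S ∈ D.powerset, if E ⊆ D \ S then (-1:ℤ)^(S.card) else 0 :=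
    Finset.sum_nbij' (fun S => D \ S) (fun S => D \ S)
      (fun S hS => by simp [mem_powerset] at *)
      (fun S hS => by simp [mem_powerset] at *)
      (fun S hS => Finset.sdiff_sdiff_eq_self (mem_powerset.1 hS))
      (fun S hS => Finset.sdiff_sdiff_eq_self (mem_powerset.1 hS))
      (fun S hS => by rw [Finset.sdiff_sdiff_eq_self (mem_powerset.1 hS)])
  rw [step]
  have h1 : ∀ S ∈ D.powerset, (if E ⊆ D \ S then (-1:ℤ)^S.card else 0)
      = if S ∈ (D \ E).powerset then (-1:ℤ)^S.card else 0 := by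
    intro S hS
    rw [mem_powerset] at hS
    refine if_congr ?_ rfl rfl
    rw [mem_powerset, Finset.subset_sdiff, Finset.subset_sdiff]
    constructor
    · rintro ⟨-, hd⟩; exact ⟨hS, hd.symm⟩
    · rintro ⟨-, hd⟩; exact ⟨hE, hd.symm⟩
  rw [Finset.sum_congr rfl h1, Finset.sum_ite_mem,
    Finset.inter_eq_right.2 (Finset.powerset_mono.2 sdiff_subset),
    Finset.sum_powerset_neg_one_pow_card]
  refine if_congr ?_ rfl rfl
  rw [Finset.sdiff_eq_empty_iff_subset]
  exact ⟨fun h => le_antisymm hE h, fun h => h.ge⟩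

lemma aux_sum_nonempty (D : Finset α) (hD : D.Nonempty) :
    ∑ S ∈ D.powerset.filter (fun S => S.Nonempty), (-1:ℤ)^S.card = -1 := by
  have h := Finset.sum_filter_add_sum_filter_not D.powerset (fun S => S.Nonempty)
    (fun S => (-1:ℤ)^S.card)
  rw [Finset.sum_powerset_neg_one_pow_card, if_neg hD.ne_empty] at h
  have h2 : D.powerset.filter (fun S => ¬ S.Nonempty) = {∅} := by
    ext S
    simp [Finset.not_nonempty_iff_eq_empty]
    rintro rfl; exact empty_subset _
  rw [h2] at h
  simp only [Finset.sum_singleton, card_empty, pow_zero] at h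
  linarith

lemma mem_PiPsi {ψ : Finset (Finset (Fin k))} {D : Fin k → Finset α}
    {x : Fin k → Option α} :
    x ∈ PiPsi ψ D ↔ (∀ i a, x i = some a → a ∈ D i)
      ∧ (Finset.univ.filter fun i => x i ≠ none) ∈ ψ := by
  rw [PiPsi, mem_filter, Fintype.mem_piFinset]
  apply and_congr_left'
  apply forall_congr'
  intro i
  cases h : x i <;> simp [h]

lemma PiPsi_eq_empty_iff {ψ : Finset (Finset (Fin k))} {S : Fin k → Finset α} :
    PiPsi ψ S = ∅ ↔ ∀ A ∈ ψ, ¬ A ⊆ Finset.univ.filter (fun i => (S i).Nonempty) := by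
  constructor
  · intro h A hA hAs
    have hc : ∀ i ∈ A, (S i).Nonempty := by
      intro i hi
      simpa using hAs hi
    classical
    set x : Fin k → Option α := fun i => if h : i ∈ A then some (hc i h).choose else none
      with hx
    have hsupp : (Finset.univ.filter fun i => x i ≠ none) = A := by
      ext i
      by_cases hi : i ∈ A <;> simp [hx, hi]
    have : x ∈ PiPsi ψ S := by
      rw [mem_PiPsi]
      refine ⟨fun i a ha => ?_, by rwa [hsupp]⟩
      by_cases hi : i ∈ A
      · simp only [hx, dif_pos hi] at ha
        rw [← Option.some_inj.1 ha] at *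
        exact (hc i hi).choose_spec
      · simp [hx, dif_neg hi] at ha
    rw [h] at this
    simp at this
  · intro h
    rw [Finset.eq_empty_iff_forall_notMem]
    intro x hx
    rw [mem_PiPsi] at hx
    refine h _ hx.2 ?_
    intro i hi
    simp only [mem_filter, mem_univ, ne_eq, true_and] at hi ⊢
    cases hxi : x i with
    | none => exact absurd hxi hi
    | some a => exact ⟨a, hx.1 i a hxi⟩

lemma aux_powerset_filter (ψ : Finset (Finset (Fin k))) (D S : Fin k → Finset α)
    (hS : ∀ i, S i ⊆ D i) :
    ((PiPsi ψ D).powerset.filter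
        fun T => ∀ i, T.biUnion (fun x => (x i).toFinset) ⊆ S i)
      = (PiPsi ψ S).powerset := by
  ext T
  simp only [mem_filter, mem_powerset, Finset.biUnion_subset]
  constructor
  · rintro ⟨hTD, hTS⟩ x hx
    rw [mem_PiPsi]
    refine ⟨fun i a ha => ?_, ((mem_PiPsi).1 (hTD hx)).2⟩
    have := hTS i x hx
    rw [ha] at this
    simpa using this
  · intro hT
    refine ⟨fun x hx => ?_, fun i x hx => ?_⟩
    · have h := (mem_PiPsi).1 (hT hx)
      exact mem_PiPsi.2 ⟨fun i a ha => hS i (h.1 i a ha), h.2⟩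
    · have h := (mem_PiPsi).1 (hT hx)
      intro a ha
      rw [Option.mem_toFinset] at ha
      exact h.1 i a ha

lemma aux_fiber_sum (D : Fin k → Finset α) (σ : Finset (Fin k))
    (hσ : σ ⊆ Finset.univ.filter fun i => (D i).Nonempty) :
    ∑ Sb ∈ (Fintype.piFinset fun i => (D i).powerset).filter
        (fun Sb => (Finset.univ.filter fun i => (Sb i).Nonempty) = σ),
      ∏ i, (-1:ℤ)^((Sb i).card) = (-1:ℤ)^σ.card := by
  classical
  have hset : (Fintype.piFinset fun i => (D i).powerset).filter
        (fun Sb => (Finset.univ.filter fun i => (Sb i).Nonempty) = σ)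
      = Fintype.piFinset fun i =>
          if i ∈ σ then (D i).powerset.filter (fun S => S.Nonempty)
          else ({∅} : Finset (Finset α)) := by
    ext Sb
    simp only [mem_filter, Fintype.mem_piFinset]
    constructor
    · rintro ⟨h1, h2⟩ i
      by_cases hi : i ∈ σ
      · rw [if_pos hi, mem_filter]
        refine ⟨h1 i, ?_⟩
        rw [← h2] at hi; simpa using hi
      · rw [if_neg hi, Finset.mem_singleton]
        rw [← h2] at hi
        simp only [mem_filter, mem_univ, true_and] at hi
        exact Finset.not_nonempty_iff_eq_empty.1 hi
    · intro h
      constructor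
      · intro i
        have := h i
        by_cases hi : i ∈ σ
        · rw [if_pos hi, mem_filter] at this; exact this.1
        · rw [if_neg hi, Finset.mem_singleton] at this
          rw [this]; exact mem_powerset.2 (empty_subset _)
      · ext i
        have := h i
        by_cases hi : i ∈ σ
        · rw [if_pos hi, mem_filter] at this
          simp [hi, this.2]
        · rw [if_neg hi, Finset.mem_singleton] at this
          simp [hi, this]
  rw [hset, ← Finset.prod_univ_sum
    (fun i => if i ∈ σ then (D i).powerset.filter (fun S => S.Nonempty)
      else ({∅} : Finset (Finset α)))
    (fun i S => (-1:ℤ)^S.card)]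
  have : ∀ i : Fin k,
      (∑ S ∈ (if i ∈ σ then (D i).powerset.filter (fun S => S.Nonempty)
          else ({∅} : Finset (Finset α))), (-1:ℤ)^S.card)
        = if i ∈ σ then -1 else 1 := by
    intro i
    by_cases hi : i ∈ σ
    · rw [if_pos hi, if_pos hi]
      exact aux_sum_nonempty _ (by simpa using hσ hi)
    · rw [if_neg hi, if_neg hi]; simp
  rw [Finset.prod_congr rfl (fun i _ => this i), Finset.prod_ite_mem,
    Finset.univ_inter, Finset.prod_const]

lemma aux_key1 (ψ : Finset (Finset (Fin k))) (D : Fin k → Finset α) :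
    Npsi ψ D = ∑ Sb ∈ Fintype.piFinset (fun i => (D i).powerset),
      (if PiPsi ψ Sb = ∅ then (1:ℤ) else 0) * ∏ i, (-1:ℤ)^((D i \ Sb i).card) := by
  classical
  have hcov : ∀ T ∈ (PiPsi ψ D).powerset, ∀ i,
      T.biUnion (fun x => (x i).toFinset) ⊆ D i := by
    intro T hT i a ha
    rw [Finset.mem_biUnion] at ha
    obtain ⟨x, hx, hax⟩ := ha
    rw [Option.mem_toFinset] at hax
    exact ((mem_PiPsi).1 (mem_powerset.1 hT hx)).1 i a hax
  rw [Npsi, Finset.sum_filter]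
  have step1 : ∀ T ∈ (PiPsi ψ D).powerset,
      (if (∀ i, T.biUnion (fun x => (x i).toFinset) = D i) then (-1:ℤ)^T.card else 0)
        = ∑ Sb ∈ Fintype.piFinset (fun i => (D i).powerset),
            (-1:ℤ)^T.card * ∏ i, (if T.biUnion (fun x => (x i).toFinset) ⊆ Sb i
              then (-1:ℤ)^((D i \ Sb i).card) else 0) := by
    intro T hT
    rw [← Finset.mul_sum, ← Finset.prod_univ_sum
      (fun i => (D i).powerset)
      (fun i S => if T.biUnion (fun x => (x i).toFinset) ⊆ S
        then (-1:ℤ)^((D i \ S).card) else 0)]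
    rw [Finset.prod_congr rfl (fun i _ => aux_sum_ite_subset (D i) _ (hcov T hT i)),
      Finset.prod_boole]
    simp only [mul_ite, mul_one, mul_zero, mem_univ, true_implies]
  rw [Finset.sum_congr rfl step1, Finset.sum_comm]
  refine Finset.sum_congr rfl fun Sb hSb => ?_
  have hSbD : ∀ i, Sb i ⊆ D i := fun i =>
    mem_powerset.1 ((Fintype.mem_piFinset).1 hSb i)
  have step2 : ∀ T ∈ (PiPsi ψ D).powerset,
      (-1:ℤ)^T.card * ∏ i, (if T.biUnion (fun x => (x i).toFinset) ⊆ Sb i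
          then (-1:ℤ)^((D i \ Sb i).card) else 0)
        = if (∀ i, T.biUnion (fun x => (x i).toFinset) ⊆ Sb i)
            then (-1:ℤ)^T.card * ∏ i, (-1:ℤ)^((D i \ Sb i).card) else 0 := by
    intro T _
    rw [Finset.prod_ite_zero]
    simp only [mul_ite, mul_zero, mem_univ, true_implies]
  rw [Finset.sum_congr rfl step2, ← Finset.sum_filter,
    aux_powerset_filter ψ D Sb hSbD, ← Finset.sum_mul,
    Finset.sum_powerset_neg_one_pow_card]

lemma aux_sign (D S : Finset α) (h : S ⊆ D) :
    (-1:ℤ)^((D\S).card) * (-1)^D.card = (-1)^S.card := by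
  rw [← Finset.card_sdiff_add_card_eq_card h, pow_add, ← mul_assoc, ← pow_add,
    ← two_mul, pow_mul]
  norm_num

lemma Npsi_eq (ψ : Finset (Finset (Fin k))) (D : Fin k → Finset α) :
    Npsi ψ D * (-1:ℤ) ^ (∑ i, (D i).card)
      = ∑ σ ∈ ((Finset.univ.filter fun i => (D i).Nonempty).powerset.filter
          (fun σ => ∀ A ∈ ψ, ¬ A ⊆ σ)), (-1:ℤ)^σ.card := by
  classical
  rw [aux_key1, Finset.sum_mul]
  have step : ∀ Sb ∈ Fintype.piFinset (fun i => (D i).powerset),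
      (if PiPsi ψ Sb = ∅ then (1:ℤ) else 0) * (∏ i, (-1:ℤ)^((D i \ Sb i).card))
          * (-1:ℤ) ^ (∑ i, (D i).card)
        = (if (∀ A ∈ ψ, ¬ A ⊆ Finset.univ.filter (fun i => (Sb i).Nonempty))
            then (1:ℤ) else 0) * ∏ i, (-1:ℤ)^((Sb i).card) := by
    intro Sb hSb
    have hSbD : ∀ i, Sb i ⊆ D i := fun i =>
      mem_powerset.1 ((Fintype.mem_piFinset).1 hSb i)
    have hprod : (∏ i, (-1:ℤ)^((D i \ Sb i).card)) * (-1:ℤ)^(∑ i, (D i).card)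
        = ∏ i, (-1:ℤ)^((Sb i).card) := by
      rw [← Finset.prod_pow_eq_pow_sum, ← Finset.prod_mul_distrib]
      exact Finset.prod_congr rfl fun i _ => aux_sign _ _ (hSbD i)
    rw [mul_assoc, hprod]
    congr 1
    simp only [PiPsi_eq_empty_iff]
  rw [Finset.sum_congr rfl step]
  have hmaps : ∀ Sb ∈ Fintype.piFinset (fun i => (D i).powerset),
      (Finset.univ.filter fun i => (Sb i).Nonempty)
        ∈ (Finset.univ.filter fun i => (D i).Nonempty).powerset := by
    intro Sb hSb
    rw [mem_powerset]
    intro i hi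
    simp only [mem_filter, mem_univ, true_and] at hi ⊢
    exact hi.mono (mem_powerset.1 ((Fintype.mem_piFinset).1 hSb i))
  rw [← Finset.sum_fiberwise_of_maps_to hmaps]
  have inner : ∀ σ ∈ (Finset.univ.filter fun i => (D i).Nonempty).powerset,
      (∑ Sb ∈ (Fintype.piFinset fun i => (D i).powerset).filter
          (fun Sb => (Finset.univ.filter fun i => (Sb i).Nonempty) = σ),
        (if (∀ A ∈ ψ, ¬ A ⊆ Finset.univ.filter (fun i => (Sb i).Nonempty))
            then (1:ℤ) else 0) * ∏ i, (-1:ℤ)^((Sb i).card))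
        = (if (∀ A ∈ ψ, ¬ A ⊆ σ) then (1:ℤ) else 0) * (-1:ℤ)^σ.card := by
    intro σ hσ
    have h1 : ∀ Sb ∈ (Fintype.piFinset fun i => (D i).powerset).filter
          (fun Sb => (Finset.univ.filter fun i => (Sb i).Nonempty) = σ),
        (if (∀ A ∈ ψ, ¬ A ⊆ Finset.univ.filter (fun i => (Sb i).Nonempty))
            then (1:ℤ) else 0) * ∏ i, (-1:ℤ)^((Sb i).card)
          = (if (∀ A ∈ ψ, ¬ A ⊆ σ) then (1:ℤ) else 0)
              * ∏ i, (-1:ℤ)^((Sb i).card) := by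
      intro Sb hSb
      rw [(mem_filter.1 hSb).2]
    rw [Finset.sum_congr rfl h1, ← Finset.mul_sum,
      aux_fiber_sum D σ (mem_powerset.1 hσ)]
  rw [Finset.sum_congr rfl inner]
  simp only [ite_mul, one_mul, zero_mul]
  exact (Finset.sum_filter _ _).symm

end Aux

/-- The quantity `N(D̄, ψ) · (−1)^{|D̄|}` depends only on `ψ` and on
`sig(D̄) = {i : D_i ≠ ∅}`: for any two `k`-tuples of finite sets `D̄`, `D̄′` with
`sig(D̄) = sig(D̄′)` one has `N(D̄, ψ)·(−1)^{|D̄|} = N(D̄′, ψ)·(−1)^{|D̄′|}`. -/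
theorem stmt_7 {α β : Type*} [DecidableEq α] [DecidableEq β] (k : ℕ)
    (ψ : Finset (Finset (Fin k))) (D : Fin k → Finset α) (D' : Fin k → Finset β)
    (hsig : (Finset.univ.filter fun i => (D i).Nonempty)
      = (Finset.univ.filter fun i => (D' i).Nonempty)) :
    Npsi ψ D * (-1 : ℤ) ^ (∑ i, (D i).card)
      = Npsi ψ D' * (-1 : ℤ) ^ (∑ i, (D' i).card) := by
  rw [Npsi_eq, Npsi_eq, hsig]
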